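/- Let (e_t, F_t)_{t≥0} and (ê_t, F̂_t)_{t≥0} be emphatic trace iterates defined by the same recursions, driven by the same random state-action sequence (S_t, A_t), but starting from two possibly different initial conditions (e_0, F_0) and (ê_0, F̂_0). Under Assumption 1, F_t − F̂_t → 0 almost surely and e_t − ê_t → 0 (the zero vector of ℝ^n) almost surely as t → ∞. -/

import Mathlib

open MeasureTheory Filter Finset

noncomputable section

/-- Importance sampling ratio `ρ(s,a) = π(a|s)/π°(a|s)` (with the convention `0/0 = 0`,
which is automatic for Lean's real division). -/
def rho {S A : Type*} (pol polb : S → A → ℝ) (s : S) (a : A) : ℝ :=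
  pol s a / polb s a

/-- Transition matrix of the state chain induced by a policy:
`P_π(s,s') = ∑_a π(a|s) p(s'|s,a)`. -/
def Ppi {S A : Type*} [Fintype A] (p : S → A → S → ℝ) (pol : S → A → ℝ) :
    Matrix S S ℝ :=
  Matrix.of fun s s' => ∑ a, pol s a * p s a s'

/-- The σ-algebra `F_t = σ(S_0, A_0, …, A_{t-1}, S_t)`. -/
def filtSA {Ω S A : Type*} [MeasurableSpace S] [MeasurableSpace A]
    (St : ℕ → Ω → S) (At : ℕ → Ω → A) (t : ℕ) : MeasurableSpace Ω :=
  (⨆ k ∈ Finset.range (t + 1), MeasurableSpace.comap (St k) inferInstance) ⊔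
    ⨆ k ∈ Finset.range t, MeasurableSpace.comap (At k) inferInstance

/-- Basic conditions on the MDP model together with Assumption 1. -/
structure MDPModel {S A : Type*} [Fintype S] [Fintype A] [DecidableEq S]
    (p : S → A → S → ℝ) (pol polb : S → A → ℝ) (γf lamf ifun : S → ℝ) : Prop where
  p_nonneg : ∀ s a s', 0 ≤ p s a s'
  p_sum : ∀ s a, ∑ s', p s a s' = 1
  pol_nonneg : ∀ s a, 0 ≤ pol s a
  pol_sum : ∀ s, ∑ a, pol s a = 1
  polb_nonneg : ∀ s a, 0 ≤ polb s a
  polb_sum : ∀ s, ∑ a, polb s a = 1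
  gamma_mem : ∀ s, γf s ∈ Set.Icc (0 : ℝ) 1
  lambda_mem : ∀ s, lamf s ∈ Set.Icc (0 : ℝ) 1
  interest_nonneg : ∀ s, 0 ≤ ifun s
  /-- Assumption 1(i): `I - P_π Γ` is invertible. -/
  inv : IsUnit (1 - Ppi p pol * Matrix.diagonal γf)
  /-- Assumption 1(ii): the behavior chain is irreducible. -/
  irred : ∀ s s', ∃ t : ℕ, 0 < t ∧ 0 < (Ppi p polb ^ t) s s'
  /-- Assumption 1(ii): `π°(a|s) > 0` whenever `π(a|s) > 0`. -/
  support : ∀ s a, 0 < pol s a → 0 < polb s a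

/-- The state-action process `(S_t, A_t)` is the Markov chain induced by the behavior
policy `π°` (arbitrary initial distribution). -/
structure IsBehaviorChain {S A Ω : Type*} [Fintype S] [Fintype A]
    [MeasurableSpace S] [MeasurableSpace A] [MeasurableSpace Ω]
    (p : S → A → S → ℝ) (polb : S → A → ℝ)
    (P : Measure Ω) (St : ℕ → Ω → S) (At : ℕ → Ω → A) : Prop where
  smeas : ∀ t, Measurable (St t)
  ameas : ∀ t, Measurable (At t)
  markov : ∀ (t : ℕ) (f : A × S → ℝ),
    (P[(fun ω => f (At t ω, St (t + 1) ω)) | filtSA St At t]) =ᵐ[P]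
      fun ω => ∑ a, ∑ s', polb (St t ω) a * p (St t ω) a s' * f (a, s')

/-- The emphatic trace iterates `(e_t, F_t)` with initial condition `(e0, F0)`. -/
structure IsTrace {S A Ω : Type*} {n : ℕ} (pol polb : S → A → ℝ) (γf lamf ifun : S → ℝ)
    (φ : S → Fin n → ℝ) (St : ℕ → Ω → S) (At : ℕ → Ω → A)
    (e : ℕ → Ω → Fin n → ℝ) (F : ℕ → Ω → ℝ) (e0 : Fin n → ℝ) (F0 : ℝ) : Prop where
  init_e : ∀ ω, e 0 ω = e0
  init_F : ∀ ω, F 0 ω = F0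
  rec_F : ∀ t ω, F (t + 1) ω =
    γf (St (t + 1) ω) * rho pol polb (St t ω) (At t ω) * F t ω + ifun (St (t + 1) ω)
  rec_e : ∀ t ω, e (t + 1) ω =
    (lamf (St (t + 1) ω) * γf (St (t + 1) ω) * rho pol polb (St t ω) (At t ω)) • e t ω +
      (lamf (St (t + 1) ω) * ifun (St (t + 1) ω) +
        (1 - lamf (St (t + 1) ω)) * F (t + 1) ω) • φ (St (t + 1) ω)

end

/-!
Both traces obey the same affine recursions, so only the initial difference propagates:
`F_t - F̂_t = X_t (F_0 - F̂_0)` and `‖e_t - ê_t‖ ≤ X_t (‖e_0 - ê_0‖ + t ‖φ‖ |F_0 - F̂_0|)`,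
where `X_t = ∏_{k<t} γ(S_{k+1}) ρ(S_k, A_k)`. It therefore suffices that `(t + 1) X_t → 0` a.s.,
which follows from `∑_t (t + 1) 𝔼[X_t] < ∞`. By the Markov property (`π° ρ = π`),
`𝔼[X_t] ≤ ‖(P_π Γ)^t 𝟙‖`. The vectors `(P_π Γ)^t 𝟙` decrease to a fixed point of `P_π Γ`, which
vanishes because `I - P_π Γ` is invertible; once `(P_π Γ)^T 𝟙 ≤ 1/2`, nonnegativity of `P_π Γ`
halves the vector every `T` steps, so the decay is geometric.
-/

open scoped Matrix

section Sequences

lemma pow_mul_le_mul_pow_of_shift_le {a : ℕ → ℝ} {T : ℕ} {q C : ℝ} (hT : 0 < T) (hq0 : 0 ≤ q)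
    (hq1 : q ≤ 1) (hC : 0 ≤ C) (ha : ∀ t, a t ≤ C) (hshift : ∀ t, a (t + T) ≤ q ^ T * a t)
    (t : ℕ) : q ^ T * a t ≤ C * q ^ t := by
  induction t using Nat.strong_induction_on with
  | _ t ih =>
    rcases lt_or_ge t T with ht | ht
    · calc q ^ T * a t ≤ q ^ T * C := mul_le_mul_of_nonneg_left (ha t) (pow_nonneg hq0 T)
        _ ≤ q ^ t * C := mul_le_mul_of_nonneg_right (pow_le_pow_of_le_one hq0 hq1 ht.le) hC
        _ = C * q ^ t := mul_comm _ _
    · obtain ⟨s, rfl⟩ := Nat.exists_eq_add_of_le' ht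
      have hqT : 0 ≤ q ^ T := pow_nonneg hq0 T
      calc q ^ T * a (s + T) ≤ q ^ T * (q ^ T * a s) := mul_le_mul_of_nonneg_left (hshift s) hqT
        _ ≤ q ^ T * (C * q ^ s) := mul_le_mul_of_nonneg_left (ih s (by omega)) hqT
        _ = C * q ^ (s + T) := by ring

lemma summable_natCast_add_one_mul_of_shift_le {a : ℕ → ℝ} {T : ℕ} {r C : ℝ} (hT : 0 < T)
    (hr0 : 0 < r) (hr1 : r < 1) (hC : 0 ≤ C) (ha0 : ∀ t, 0 ≤ a t) (ha : ∀ t, a t ≤ C)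
    (hshift : ∀ t, a (t + T) ≤ r * a t) : Summable fun t : ℕ => ((t : ℝ) + 1) * a t := by
  set q : ℝ := r ^ (T⁻¹ : ℝ)
  have hqT : q ^ T = r := Real.rpow_inv_natCast_pow hr0.le hT.ne'
  have hq0 : 0 < q := Real.rpow_pos_of_pos hr0 _
  have hq1 : q < 1 := Real.rpow_lt_one hr0.le hr1 (by positivity)
  have hgeom : Summable fun t : ℕ => (t : ℝ) * q ^ t + q ^ t := by
    refine .add ?_ (summable_geometric_of_lt_one hq0.le hq1)
    simpa using summable_pow_mul_geometric_of_norm_lt_one 1 (r := q)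
      (by rwa [Real.norm_of_nonneg hq0.le])
  refine (hgeom.mul_left (C / r)).of_nonneg_of_le (fun t => by have := ha0 t; positivity)
    fun t => ?_
  have hdecay : r * a t ≤ C * q ^ t := hqT ▸
    pow_mul_le_mul_pow_of_shift_le hT hq0.le hq1.le hC ha (hqT ▸ hshift) t
  rw [← le_div_iff₀' hr0] at hdecay
  calc ((t : ℝ) + 1) * a t ≤ ((t : ℝ) + 1) * (C * q ^ t / r) :=
        mul_le_mul_of_nonneg_left hdecay (by positivity)
    _ = C / r * ((t : ℝ) * q ^ t + q ^ t) := by ring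

lemma le_prod_mul_of_le_mul_add {u x : ℕ → ℝ} {K : ℝ} (hx : ∀ t, 0 ≤ x t)
    (hu : ∀ t, u (t + 1) ≤ x t * u t + K * ∏ k ∈ range (t + 1), x k) (t : ℕ) :
    u t ≤ (∏ k ∈ range t, x k) * (u 0 + t * K) := by
  induction t with
  | zero => simp
  | succ t ih =>
    calc u (t + 1) ≤ x t * u t + K * ∏ k ∈ range (t + 1), x k := hu t
      _ ≤ x t * ((∏ k ∈ range t, x k) * (u 0 + t * K)) + K * ∏ k ∈ range (t + 1), x k :=
          add_le_add_left (mul_le_mul_of_nonneg_left ih (hx t)) _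
      _ = (∏ k ∈ range (t + 1), x k) * (u 0 + ↑(t + 1) * K) := by
          rw [prod_range_succ]; push_cast; ring

lemma tendsto_mul_add_natCast_mul {x : ℕ → ℝ}
    (hx : Tendsto (fun t : ℕ => ((t : ℝ) + 1) * x t) atTop (nhds 0)) (a b : ℝ) :
    Tendsto (fun t : ℕ => x t * (a + t * b)) atTop (nhds 0) := by
  have hx0 : Tendsto x atTop (nhds 0) := by
    have := hx.mul (tendsto_one_div_add_atTop_nhds_zero_nat (𝕜 := ℝ))
    rw [zero_mul] at this
    refine this.congr fun t => ?_
    field_simp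
  have := (hx0.mul_const (a - b)).add (hx.mul_const b)
  rw [zero_mul, zero_mul, add_zero] at this
  exact this.congr fun t => by ring

end Sequences

lemma pi_norm_le_pi_norm_of_nonneg_of_le {ι : Type*} [Fintype ι] {v w : ι → ℝ} (hv : 0 ≤ v)
    (h : v ≤ w) : ‖v‖ ≤ ‖w‖ :=
  (pi_norm_le_iff_of_nonneg (norm_nonneg w)).2 fun i => by
    rw [Real.norm_of_nonneg (hv i)]
    exact (h i).trans ((le_abs_self _).trans (norm_le_pi_norm w i))

namespace Matrix

variable {S : Type*} [Fintype S] {M : Matrix S S ℝ}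

lemma mulVec_mono_of_nonneg (hM : ∀ i j, 0 ≤ M i j) {v w : S → ℝ} (h : v ≤ w) :
    M *ᵥ v ≤ M *ᵥ w :=
  fun i => sum_le_sum fun j _ => mul_le_mul_of_nonneg_left (h j) (hM i j)

variable [DecidableEq S]

lemma pow_succ_mulVec (t : ℕ) (v : S → ℝ) : M ^ (t + 1) *ᵥ v = M *ᵥ (M ^ t *ᵥ v) := by
  rw [pow_succ', mulVec_mulVec]

lemma pow_mulVec_one_nonneg (hM : ∀ i j, 0 ≤ M i j) (t : ℕ) : 0 ≤ M ^ t *ᵥ 1 := by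
  induction t with
  | zero => simp
  | succ t ih => simpa [pow_succ_mulVec] using mulVec_mono_of_nonneg hM ih

lemma pow_succ_mulVec_one_le (hM : ∀ i j, 0 ≤ M i j) (hM1 : M *ᵥ 1 ≤ 1) (t : ℕ) :
    M ^ (t + 1) *ᵥ 1 ≤ M ^ t *ᵥ 1 := by
  induction t with
  | zero => simpa using hM1
  | succ t ih =>
    calc M ^ (t + 2) *ᵥ 1 = M *ᵥ (M ^ (t + 1) *ᵥ 1) := pow_succ_mulVec _ _
      _ ≤ M *ᵥ (M ^ t *ᵥ 1) := mulVec_mono_of_nonneg hM ih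
      _ = M ^ (t + 1) *ᵥ 1 := (pow_succ_mulVec _ _).symm

lemma pow_add_mulVec_one_le (hM : ∀ i j, 0 ≤ M i j) (t T : ℕ) :
    M ^ (t + T) *ᵥ 1 ≤ ‖M ^ T *ᵥ 1‖ • (M ^ t *ᵥ 1) := by
  induction t with
  | zero =>
    intro i
    simpa using (le_abs_self _).trans (norm_le_pi_norm (M ^ T *ᵥ 1) i)
  | succ t ih =>
    rw [Nat.add_right_comm, pow_succ_mulVec, pow_succ_mulVec, ← mulVec_smul]
    exact mulVec_mono_of_nonneg hM ih

lemma tendsto_pow_mulVec_one (hM : ∀ i j, 0 ≤ M i j) (hM1 : M *ᵥ 1 ≤ 1)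
    (hM_inv : IsUnit (1 - M)) : Tendsto (fun t => M ^ t *ᵥ 1) atTop (nhds 0) := by
  have hlim := tendsto_atTop_ciInf (f := fun t => M ^ t *ᵥ 1)
    (antitone_nat_of_succ_le (pow_succ_mulVec_one_le hM hM1))
    ⟨0, Set.forall_mem_range.2 (pow_mulVec_one_nonneg hM)⟩
  set L := ⨅ t, M ^ t *ᵥ (1 : S → ℝ)
  have hfix : M *ᵥ L = L := by
    refine tendsto_nhds_unique ?_ ((tendsto_add_atTop_iff_nat 1).2 hlim)
    simp_rw [pow_succ_mulVec]
    exact ((mulVecLin M).continuous_of_finiteDimensional.tendsto L).comp hlim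
  have hL : L = 0 := (mulVec_injective_iff_isUnit.2 hM_inv) <| by
    rw [sub_mulVec, one_mulVec, hfix, sub_self, mulVec_zero]
  rwa [hL] at hlim

lemma summable_natCast_add_one_mul_norm_pow_mulVec_one (hM : ∀ i j, 0 ≤ M i j)
    (hM1 : M *ᵥ 1 ≤ 1) (hM_inv : IsUnit (1 - M)) :
    Summable fun t : ℕ => ((t : ℝ) + 1) * ‖M ^ t *ᵥ 1‖ := by
  have hsmall : ∀ᶠ T in atTop, 0 < T ∧ ‖M ^ T *ᵥ 1‖ ≤ 1 / 2 :=
    (eventually_gt_atTop 0).and <| (tendsto_pow_mulVec_one hM hM1 hM_inv).norm.eventually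
      (ge_mem_nhds (by norm_num))
  obtain ⟨T, hT, hhalf⟩ := hsmall.exists
  have hnonneg := pow_mulVec_one_nonneg hM
  have hanti : Antitone fun t => M ^ t *ᵥ 1 :=
    antitone_nat_of_succ_le (pow_succ_mulVec_one_le hM hM1)
  refine summable_natCast_add_one_mul_of_shift_le hT (by norm_num : (0 : ℝ) < 1 / 2)
    (by norm_num) (norm_nonneg _) (fun t => norm_nonneg _)
    (fun t => pi_norm_le_pi_norm_of_nonneg_of_le (hnonneg t) (hanti t.zero_le)) fun t => ?_
  calc ‖M ^ (t + T) *ᵥ 1‖ ≤ ‖‖M ^ T *ᵥ 1‖ • (M ^ t *ᵥ 1)‖ :=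
        pi_norm_le_pi_norm_of_nonneg_of_le (hnonneg _) (pow_add_mulVec_one_le hM t T)
    _ ≤ 1 / 2 * ‖M ^ t *ᵥ 1‖ := by
        rw [norm_smul, norm_norm]; exact mul_le_mul_of_nonneg_right hhalf (norm_nonneg _)

end Matrix

section Filtration

variable {Ω S A : Type*} [MeasurableSpace S] [MeasurableSpace A]
  {St : ℕ → Ω → S} {At : ℕ → Ω → A}

lemma measurable_state_filtSA {k t : ℕ} (hk : k ≤ t) : Measurable[filtSA St At t] (St k) :=
  measurable_iff_comap_le.2 <| le_sup_of_le_left <|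
    le_iSup₂_of_le (f := fun k (_ : k ∈ range (t + 1)) => MeasurableSpace.comap (St k) _) k
      (mem_range.2 (Nat.lt_succ_of_le hk)) le_rfl

lemma measurable_action_filtSA {k t : ℕ} (hk : k < t) : Measurable[filtSA St At t] (At k) :=
  measurable_iff_comap_le.2 <| le_sup_of_le_right <|
    le_iSup₂_of_le (f := fun k (_ : k ∈ range t) => MeasurableSpace.comap (At k) _) k
      (mem_range.2 hk) le_rfl

lemma filtSA_le [MeasurableSpace Ω] (hS : ∀ t, Measurable (St t)) (hA : ∀ t, Measurable (At t))
    (t : ℕ) : filtSA St At t ≤ ‹MeasurableSpace Ω› :=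
  sup_le (iSup₂_le fun k _ => (hS k).comap_le) (iSup₂_le fun k _ => (hA k).comap_le)

end Filtration

lemma MeasureTheory.Integrable.mul_comp_of_finite {Ω β : Type*} [MeasurableSpace Ω]
    {P : Measure Ω} [Finite β] [MeasurableSpace β] [MeasurableSingletonClass β] {g : Ω → ℝ}
    (hg : Integrable g P) {Y : Ω → β} (hY : Measurable Y) (u : β → ℝ) :
    Integrable (fun ω => g ω * u (Y ω)) P := by
  obtain ⟨c, hc⟩ := Finite.exists_le fun b => ‖u b‖
  exact hg.mul_bdd ((measurable_of_finite u).comp hY).aestronglyMeasurable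
    (ae_of_all _ fun ω => hc (Y ω))

lemma MeasureTheory.ae_tendsto_zero_of_summable_integral_norm {Ω : Type*} [MeasurableSpace Ω]
    {P : Measure Ω} {Y : ℕ → Ω → ℝ} (hY : ∀ t, Integrable (Y t) P)
    (hsum : Summable fun t => ∫ ω, ‖Y t ω‖ ∂P) :
    ∀ᵐ ω ∂P, Tendsto (fun t => Y t ω) atTop (nhds 0) := by
  have hfin : ∑' t, eLpNorm (Y t) 1 P ≠ ⊤ := by
    simp_rw [eLpNorm_one_eq_lintegral_enorm, ← ofReal_integral_norm_eq_lintegral_enorm (hY _)]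
    rw [← ENNReal.ofReal_tsum_of_nonneg (fun t => integral_nonneg fun _ => norm_nonneg _) hsum]
    exact ENNReal.ofReal_ne_top
  filter_upwards [summable_norm_of_tsum_eLpNorm_ne_top le_rfl
    (fun t => (hY t).aestronglyMeasurable) hfin] with ω hω
  exact tendsto_zero_iff_norm_tendsto_zero.2 hω.tendsto_atTop_zero

section BehaviorChain

variable {S A Ω : Type*} [Fintype S] [Fintype A] [MeasurableSpace S] [MeasurableSingletonClass S]
  [MeasurableSpace A] [MeasurableSingletonClass A] [MeasurableSpace Ω]
  {p : S → A → S → ℝ} {polb : S → A → ℝ} {P : Measure Ω} [IsFiniteMeasure P]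
  {St : ℕ → Ω → S} {At : ℕ → Ω → A}

namespace IsBehaviorChain

lemma integral_mul_comp_succ (hc : IsBehaviorChain p polb P St At) {t : ℕ} {g : Ω → ℝ}
    (hg : Measurable[filtSA St At t] g) (hgi : Integrable g P) (f : A × S → ℝ) :
    ∫ ω, g ω * f (At t ω, St (t + 1) ω) ∂P =
      ∫ ω, g ω * ∑ a, ∑ s', polb (St t ω) a * p (St t ω) a s' * f (a, s') ∂P := by
  have hY : Measurable fun ω => (At t ω, St (t + 1) ω) := (hc.ameas t).prodMk (hc.smeas (t + 1))
  have hf : Integrable (fun ω => f (At t ω, St (t + 1) ω)) P := by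
    simpa using (integrable_const (1 : ℝ)).mul_comp_of_finite hY f
  calc ∫ ω, g ω * f (At t ω, St (t + 1) ω) ∂P
      = ∫ ω, (P[g * fun ω => f (At t ω, St (t + 1) ω) | filtSA St At t]) ω ∂P :=
        (integral_condExp (filtSA_le hc.smeas hc.ameas t)).symm
    _ = _ := by
        refine integral_congr_ae ?_
        filter_upwards [condExp_mul_of_stronglyMeasurable_left hg.stronglyMeasurable
          (hgi.mul_comp_of_finite hY f) hf, hc.markov t f] with ω h1 h2
        rw [h1, Pi.mul_apply, h2]

lemma integral_mul_comp_transition (hc : IsBehaviorChain p polb P St At) {t : ℕ} {g : Ω → ℝ}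
    (hg : Measurable[filtSA St At t] g) (hgi : Integrable g P) (f : S → A → S → ℝ) :
    ∫ ω, g ω * f (St t ω) (At t ω) (St (t + 1) ω) ∂P =
      ∫ ω, g ω * ∑ a, ∑ s', polb (St t ω) a * p (St t ω) a s' * f (St t ω) a s' ∂P := by
  classical
  set ind : S → S → ℝ := fun s x => if x = s then 1 else 0
  set gs : S → Ω → ℝ := fun s ω => g ω * ind s (St t ω)
  have hgs_meas (s : S) : Measurable[filtSA St At t] (gs s) :=
    hg.mul ((measurable_of_finite (ind s)).comp (measurable_state_filtSA le_rfl))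
  have hgs_int (s : S) : Integrable (gs s) P := hgi.mul_comp_of_finite (hc.smeas t) _
  have hsplit (k : S → Ω → ℝ) (ω : Ω) : g ω * k (St t ω) ω = ∑ s, gs s ω * k s ω := by
    simp [gs, ind, ite_mul]
  have hY : Measurable fun ω => (At t ω, St (t + 1) ω) := (hc.ameas t).prodMk (hc.smeas (t + 1))
  calc ∫ ω, g ω * f (St t ω) (At t ω) (St (t + 1) ω) ∂P
      = ∫ ω, ∑ s, gs s ω * f s (At t ω) (St (t + 1) ω) ∂P := by
        simp_rw [hsplit fun s ω => f s (At t ω) (St (t + 1) ω)]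
    _ = ∑ s, ∫ ω, gs s ω * f s (At t ω) (St (t + 1) ω) ∂P :=
        integral_finsetSum _ fun s _ => (hgs_int s).mul_comp_of_finite hY fun z => f s z.1 z.2
    _ = ∑ s, ∫ ω, gs s ω * ∑ a, ∑ s', polb (St t ω) a * p (St t ω) a s' * f s a s' ∂P :=
        sum_congr rfl fun s _ =>
          hc.integral_mul_comp_succ (hgs_meas s) (hgs_int s) fun z => f s z.1 z.2
    _ = ∫ ω, ∑ s, gs s ω * ∑ a, ∑ s', polb (St t ω) a * p (St t ω) a s' * f s a s' ∂P :=
        (integral_finsetSum _ fun s _ => (hgs_int s).mul_comp_of_finite (hc.smeas t)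
          fun x => ∑ a, ∑ s', polb x a * p x a s' * f s a s').symm
    _ = _ := by
        simp_rw [← hsplit fun s ω => ∑ a, ∑ s', polb (St t ω) a * p (St t ω) a s' * f s a s']

end IsBehaviorChain

end BehaviorChain

section Model

variable {S A : Type*} [Fintype S] [Fintype A] [DecidableEq S]
  {p : S → A → S → ℝ} {pol polb : S → A → ℝ} {γf lamf ifun : S → ℝ}

lemma Ppi_mul_diagonal_mulVec_apply (h : S → ℝ) (s : S) :
    ((Ppi p pol * Matrix.diagonal γf) *ᵥ h) s = ∑ a, ∑ s', pol s a * p s a s' * (γf s' * h s') := by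
  simp only [Matrix.mulVec, dotProduct, Matrix.mul_diagonal, Ppi, Matrix.of_apply, sum_mul]
  rw [sum_comm]
  exact sum_congr rfl fun _ _ => sum_congr rfl fun _ _ => by ring

namespace MDPModel

variable (hm : MDPModel p pol polb γf lamf ifun)
include hm

lemma rho_nonneg (s : S) (a : A) : 0 ≤ rho pol polb s a :=
  div_nonneg (hm.pol_nonneg s a) (hm.polb_nonneg s a)

lemma polb_mul_rho (s : S) (a : A) : polb s a * rho pol polb s a = pol s a := by
  rcases (hm.polb_nonneg s a).eq_or_lt with hb | hb
  · have hp : 0 = pol s a := (hm.pol_nonneg s a).eq_or_lt.resolve_right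
      fun hp => (hm.support s a hp).ne hb
    simp [rho, ← hb, ← hp]
  · exact mul_div_cancel₀ _ hb.ne'

lemma Ppi_mul_diagonal_nonneg (s s' : S) : 0 ≤ (Ppi p pol * Matrix.diagonal γf) s s' := by
  rw [Matrix.mul_diagonal]
  exact mul_nonneg (sum_nonneg fun a _ => mul_nonneg (hm.pol_nonneg s a) (hm.p_nonneg s a s'))
    (hm.gamma_mem s').1

lemma Ppi_mul_diagonal_mulVec_one_le : (Ppi p pol * Matrix.diagonal γf) *ᵥ 1 ≤ 1 := fun s => by
  rw [Ppi_mul_diagonal_mulVec_apply, Pi.one_apply, ← hm.pol_sum s]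
  refine sum_le_sum fun a _ => ?_
  calc ∑ s', pol s a * p s a s' * (γf s' * 1) ≤ ∑ s', pol s a * p s a s' :=
        sum_le_sum fun s' _ => by
          rw [mul_one]
          exact mul_le_of_le_one_right (mul_nonneg (hm.pol_nonneg s a) (hm.p_nonneg s a s'))
            (hm.gamma_mem s').2
    _ = pol s a := by rw [← mul_sum, hm.p_sum, mul_one]

end MDPModel

end Model

noncomputable def rhoGammaProd {S A Ω : Type*} (pol polb : S → A → ℝ) (γf : S → ℝ) (St : ℕ → Ω → S)
    (At : ℕ → Ω → A) (t : ℕ) (ω : Ω) : ℝ :=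
  ∏ k ∈ range t, γf (St (k + 1) ω) * rho pol polb (St k ω) (At k ω)

section RhoGammaProd

variable {S A Ω : Type*} {pol polb : S → A → ℝ} {γf : S → ℝ} {St : ℕ → Ω → S} {At : ℕ → Ω → A}

lemma rhoGammaProd_succ (t : ℕ) (ω : Ω) :
    rhoGammaProd pol polb γf St At (t + 1) ω =
      rhoGammaProd pol polb γf St At t ω * (γf (St (t + 1) ω) * rho pol polb (St t ω) (At t ω)) :=
  prod_range_succ _ _

variable [Fintype S] [Fintype A] [DecidableEq S] {p : S → A → S → ℝ} {lamf ifun : S → ℝ}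

lemma MDPModel.rhoGammaProd_nonneg (hm : MDPModel p pol polb γf lamf ifun) (t : ℕ) (ω : Ω) :
    0 ≤ rhoGammaProd pol polb γf St At t ω :=
  prod_nonneg fun _ _ => mul_nonneg (hm.gamma_mem _).1 (hm.rho_nonneg _ _)

variable [MeasurableSpace S] [MeasurableSingletonClass S] [MeasurableSpace A]
  [MeasurableSingletonClass A]

omit [DecidableEq S] in
lemma measurable_rhoGammaProd (t : ℕ) :
    Measurable[filtSA St At t] (rhoGammaProd pol polb γf St At t) :=
  Finset.measurable_prod _ fun _ hk =>
    ((measurable_of_finite γf).comp (measurable_state_filtSA (mem_range.1 hk))).mul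
      ((measurable_of_finite fun x : S × A => rho pol polb x.1 x.2).comp
        ((measurable_state_filtSA (mem_range.1 hk).le).prodMk
          (measurable_action_filtSA (mem_range.1 hk))))

variable [MeasurableSpace Ω] {P : Measure Ω} [IsFiniteMeasure P]

omit [DecidableEq S] in
lemma IsBehaviorChain.integrable_rhoGammaProd (hc : IsBehaviorChain p polb P St At) (t : ℕ) :
    Integrable (rhoGammaProd pol polb γf St At t) P := by
  induction t with
  | zero => exact (integrable_const 1).congr (ae_of_all _ fun ω => by simp [rhoGammaProd])
  | succ t ih =>
    refine (ih.mul_comp_of_finite ((hc.smeas t).prodMk ((hc.ameas t).prodMk (hc.smeas (t + 1))))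
      fun x => γf x.2.2 * rho pol polb x.1 x.2.1).congr (ae_of_all _ fun ω => ?_)
    exact (rhoGammaProd_succ t ω).symm

lemma integral_rhoGammaProd_succ_mul (hm : MDPModel p pol polb γf lamf ifun)
    (hc : IsBehaviorChain p polb P St At) (t : ℕ) (h : S → ℝ) :
    ∫ ω, rhoGammaProd pol polb γf St At (t + 1) ω * h (St (t + 1) ω) ∂P =
      ∫ ω, rhoGammaProd pol polb γf St At t ω *
        ((Ppi p pol * Matrix.diagonal γf) *ᵥ h) (St t ω) ∂P := by
  simp_rw [rhoGammaProd_succ, mul_assoc]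
  rw [hc.integral_mul_comp_transition (measurable_rhoGammaProd t)
    (hc.integrable_rhoGammaProd t) fun s a s' => γf s' * (rho pol polb s a * h s')]
  refine integral_congr_ae (ae_of_all _ fun ω => ?_)
  simp only [Ppi_mul_diagonal_mulVec_apply]
  congr 1
  refine sum_congr rfl fun a _ => sum_congr rfl fun s' _ => ?_
  rw [← hm.polb_mul_rho]
  ring

lemma integral_rhoGammaProd_mul (hm : MDPModel p pol polb γf lamf ifun)
    (hc : IsBehaviorChain p polb P St At) (t : ℕ) (h : S → ℝ) :
    ∫ ω, rhoGammaProd pol polb γf St At t ω * h (St t ω) ∂P =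
      ∫ ω, ((Ppi p pol * Matrix.diagonal γf) ^ t *ᵥ h) (St 0 ω) ∂P := by
  induction t generalizing h with
  | zero => simp [rhoGammaProd]
  | succ t ih =>
    rw [integral_rhoGammaProd_succ_mul hm hc, ih, pow_succ, Matrix.mulVec_mulVec]

variable [IsProbabilityMeasure P]

lemma integral_rhoGammaProd_le (hm : MDPModel p pol polb γf lamf ifun)
    (hc : IsBehaviorChain p polb P St At) (t : ℕ) :
    ∫ ω, rhoGammaProd pol polb γf St At t ω ∂P ≤ ‖(Ppi p pol * Matrix.diagonal γf) ^ t *ᵥ 1‖ := by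
  set v := (Ppi p pol * Matrix.diagonal γf) ^ t *ᵥ 1
  calc ∫ ω, rhoGammaProd pol polb γf St At t ω ∂P
      = ∫ ω, rhoGammaProd pol polb γf St At t ω * (1 : S → ℝ) (St t ω) ∂P := by simp
    _ = ∫ ω, v (St 0 ω) ∂P := integral_rhoGammaProd_mul hm hc t 1
    _ ≤ ∫ _, ‖v‖ ∂P := integral_mono ((Integrable.of_finite (f := v)).comp_measurable (hc.smeas 0))
        (integrable_const _) fun ω => (le_abs_self _).trans (norm_le_pi_norm v (St 0 ω))
    _ = ‖v‖ := by simp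

lemma ae_tendsto_natCast_add_one_mul_rhoGammaProd (hm : MDPModel p pol polb γf lamf ifun)
    (hc : IsBehaviorChain p polb P St At) :
    ∀ᵐ ω ∂P, Tendsto (fun t : ℕ => ((t : ℝ) + 1) * rhoGammaProd pol polb γf St At t ω) atTop
      (nhds 0) := by
  refine ae_tendsto_zero_of_summable_integral_norm
    (fun t => (hc.integrable_rhoGammaProd t).const_mul _) <|
    (Matrix.summable_natCast_add_one_mul_norm_pow_mulVec_one hm.Ppi_mul_diagonal_nonneg
      hm.Ppi_mul_diagonal_mulVec_one_le hm.inv).of_nonneg_of_le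
      (fun t => integral_nonneg fun _ => norm_nonneg _) fun t => ?_
  have hnorm (ω : Ω) : ‖((t : ℝ) + 1) * rhoGammaProd pol polb γf St At t ω‖ =
      ((t : ℝ) + 1) * rhoGammaProd pol polb γf St At t ω :=
    Real.norm_of_nonneg (mul_nonneg (by positivity) (hm.rhoGammaProd_nonneg t ω))
  simp_rw [hnorm, integral_const_mul]
  exact mul_le_mul_of_nonneg_left (integral_rhoGammaProd_le hm hc t) (by positivity)

end RhoGammaProd

namespace IsTrace

variable {S A Ω : Type*} {n : ℕ} {pol polb : S → A → ℝ} {γf lamf ifun : S → ℝ}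
  {φ : S → Fin n → ℝ} {St : ℕ → Ω → S} {At : ℕ → Ω → A} {e eh : ℕ → Ω → Fin n → ℝ}
  {F Fh : ℕ → Ω → ℝ} {e0 eh0 : Fin n → ℝ} {F0 Fh0 : ℝ}

lemma sub_F_eq (hT : IsTrace pol polb γf lamf ifun φ St At e F e0 F0)
    (hT' : IsTrace pol polb γf lamf ifun φ St At eh Fh eh0 Fh0) (t : ℕ) (ω : Ω) :
    F t ω - Fh t ω = rhoGammaProd pol polb γf St At t ω * (F0 - Fh0) := by
  induction t with
  | zero => simp [hT.init_F, hT'.init_F, rhoGammaProd]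
  | succ t ih =>
    rw [hT.rec_F, hT'.rec_F, rhoGammaProd_succ]
    linear_combination γf (St (t + 1) ω) * rho pol polb (St t ω) (At t ω) * ih

lemma norm_sub_e_le [Fintype S] [Fintype A] [DecidableEq S] {p : S → A → S → ℝ}
    (hm : MDPModel p pol polb γf lamf ifun) (hT : IsTrace pol polb γf lamf ifun φ St At e F e0 F0)
    (hT' : IsTrace pol polb γf lamf ifun φ St At eh Fh eh0 Fh0) (t : ℕ) (ω : Ω) :
    ‖e t ω - eh t ω‖ ≤
      rhoGammaProd pol polb γf St At t ω * (‖e0 - eh0‖ + t * (‖φ‖ * |F0 - Fh0|)) := by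
  set x : ℕ → ℝ := fun k => γf (St (k + 1) ω) * rho pol polb (St k ω) (At k ω)
  have hx (k : ℕ) : 0 ≤ x k := mul_nonneg (hm.gamma_mem _).1 (hm.rho_nonneg _ _)
  have key := le_prod_mul_of_le_mul_add (u := fun t => ‖e t ω - eh t ω‖)
    (K := ‖φ‖ * |F0 - Fh0|) hx (fun t => ?_) t
  · simp only [hT.init_e, hT'.init_e] at key
    exact key
  obtain ⟨hlam0, hlam1⟩ := hm.lambda_mem (St (t + 1) ω)
  have hX := hm.rhoGammaProd_nonneg (St := St) (At := At) (t + 1) ω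
  have hdiff : e (t + 1) ω - eh (t + 1) ω =
      (lamf (St (t + 1) ω) * x t) • (e t ω - eh t ω) +
        ((1 - lamf (St (t + 1) ω)) * (F (t + 1) ω - Fh (t + 1) ω)) • φ (St (t + 1) ω) := by
    rw [hT.rec_e, hT'.rec_e]
    module
  have hcoef : ‖lamf (St (t + 1) ω) * x t‖ ≤ x t := by
    rw [Real.norm_of_nonneg (mul_nonneg hlam0 (hx t))]
    exact mul_le_of_le_one_left (hx t) hlam1
  have hFcoef : ‖(1 - lamf (St (t + 1) ω)) * (F (t + 1) ω - Fh (t + 1) ω)‖ ≤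
      rhoGammaProd pol polb γf St At (t + 1) ω * |F0 - Fh0| := by
    rw [sub_F_eq hT hT', norm_mul, norm_mul, Real.norm_of_nonneg (sub_nonneg.2 hlam1),
      Real.norm_of_nonneg hX, Real.norm_eq_abs]
    exact mul_le_of_le_one_left (by positivity) (by linarith)
  calc ‖e (t + 1) ω - eh (t + 1) ω‖
      ≤ x t * ‖e t ω - eh t ω‖ + rhoGammaProd pol polb γf St At (t + 1) ω * |F0 - Fh0| * ‖φ‖ := by
        rw [hdiff]
        refine (norm_add_le _ _).trans (add_le_add ?_ ?_) <;> rw [norm_smul]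
        · exact mul_le_mul_of_nonneg_right hcoef (norm_nonneg _)
        · exact mul_le_mul hFcoef (norm_le_pi_norm φ _) (norm_nonneg _) (by positivity)
    _ = x t * ‖e t ω - eh t ω‖ + ‖φ‖ * |F0 - Fh0| * ∏ k ∈ range (t + 1), x k := by
        rw [rhoGammaProd]; ring

end IsTrace

theorem stmt3_general
    {S A : Type} [Fintype S] [Fintype A] [DecidableEq S]
    [MeasurableSpace S] [MeasurableSingletonClass S]
    [MeasurableSpace A] [MeasurableSingletonClass A]
    (p : S → A → S → ℝ) (pol polb : S → A → ℝ) (γf lamf ifun : S → ℝ)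
    (hmodel : MDPModel p pol polb γf lamf ifun)
    (n : ℕ) (φ : S → Fin n → ℝ)
    (Ω : Type) [MeasurableSpace Ω] (P : Measure Ω) [IsProbabilityMeasure P]
    (St : ℕ → Ω → S) (At : ℕ → Ω → A)
    (hchain : IsBehaviorChain p polb P St At)
    (e : ℕ → Ω → Fin n → ℝ) (F : ℕ → Ω → ℝ) (e0 : Fin n → ℝ) (F0 : ℝ)
    (htrace : IsTrace pol polb γf lamf ifun φ St At e F e0 F0)
    (eh : ℕ → Ω → Fin n → ℝ) (Fh : ℕ → Ω → ℝ) (eh0 : Fin n → ℝ) (Fh0 : ℝ)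
    (htraceh : IsTrace pol polb γf lamf ifun φ St At eh Fh eh0 Fh0) :
    (∀ᵐ ω ∂P, Tendsto (fun t => F t ω - Fh t ω) atTop (nhds 0)) ∧
    (∀ᵐ ω ∂P, Tendsto (fun t => e t ω - eh t ω) atTop (nhds 0)) := by
  have hX := ae_tendsto_natCast_add_one_mul_rhoGammaProd (γf := γf) hmodel hchain
  refine ⟨?_, ?_⟩ <;> filter_upwards [hX] with ω hω
  · simp_rw [htrace.sub_F_eq htraceh]
    simpa using tendsto_mul_add_natCast_mul hω (F0 - Fh0) 0
  · exact squeeze_zero_norm (htrace.norm_sub_e_le hmodel htraceh · ω)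
      (tendsto_mul_add_natCast_mul hω _ _)

/-- Two emphatic trace iterates driven by the same state-action
sequence but with different initial conditions satisfy `F_t − F̂_t → 0` a.s. and
`e_t − ê_t → 0` a.s. -/
theorem stmt3
    {S A : Type} [Fintype S] [Nonempty S] [Fintype A] [Nonempty A] [DecidableEq S]
    [MeasurableSpace S] [MeasurableSingletonClass S]
    [MeasurableSpace A] [MeasurableSingletonClass A]
    (p : S → A → S → ℝ) (pol polb : S → A → ℝ) (γf lamf ifun : S → ℝ)
    (hmodel : MDPModel p pol polb γf lamf ifun)
    (n : ℕ) (hn : 1 ≤ n) (φ : S → Fin n → ℝ)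
    (Ω : Type) [MeasurableSpace Ω] (P : Measure Ω) [IsProbabilityMeasure P]
    (St : ℕ → Ω → S) (At : ℕ → Ω → A)
    (hchain : IsBehaviorChain p polb P St At)
    (e : ℕ → Ω → Fin n → ℝ) (F : ℕ → Ω → ℝ) (e0 : Fin n → ℝ) (F0 : ℝ) (hF0 : 0 ≤ F0)
    (htrace : IsTrace pol polb γf lamf ifun φ St At e F e0 F0)
    (eh : ℕ → Ω → Fin n → ℝ) (Fh : ℕ → Ω → ℝ) (eh0 : Fin n → ℝ) (Fh0 : ℝ) (hFh0 : 0 ≤ Fh0)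
    (htraceh : IsTrace pol polb γf lamf ifun φ St At eh Fh eh0 Fh0) :
    (∀ᵐ ω ∂P, Tendsto (fun t => F t ω - Fh t ω) atTop (nhds 0)) ∧
    (∀ᵐ ω ∂P, Tendsto (fun t => e t ω - eh t ω) atTop (nhds 0)) :=
  stmt3_general p pol polb γf lamf ifun hmodel n φ Ω P St At hchain e F e0 F0 htrace eh Fh eh0 Fh0
    htraceh
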